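/- (Lemma A.2) Fix ρ > 0. For any scoring functions f, f' ∈ F and any distribution D over X × Y, MCSD^ρ_{D_x}(f, f') ≤ E^ρ_D(f) + E^ρ_D(f'), where MCSD^ρ_{D_x}(f, f') = (1/K)·E_{x∼D_x} ‖M^ρ(f(x)) − M^ρ(f'(x))‖_1 and E^ρ_D(g) = E_{(x,y)∼D} ∑_{k=1}^K Φ_ρ(μ_k(g(x), y)). -/

import Mathlib

open MeasureTheory Finset

/-- The ramp loss with margin `ρ`. -/
noncomputable def ramp (ρ x : ℝ) : ℝ :=
  if ρ ≤ x then 0 else if x ≤ 0 then 1 else 1 - x / ρ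

/-- The absolute margin function: `margin w y k = w k` if `k = y`, else `-w k`. -/
def margin {K : ℕ} (w : Fin K → ℝ) (y k : Fin K) : ℝ :=
  if k = y then w k else -w k

/-- Entrywise L1 distance between the matrices of absolute margin violations
`M^ρ(u)` and `M^ρ(v)`, where `M^ρ_{i,j}(w) = Φ_ρ(μ_i(w,j))`. -/
noncomputable def l1diff (ρ : ℝ) {K : ℕ} (u v : Fin K → ℝ) : ℝ :=
  ∑ i : Fin K, ∑ j : Fin K, |ramp ρ (margin u j i) - ramp ρ (margin v j i)|

/-- The margin-based multi-class loss `L^ρ(w, y) = ∑_k Φ_ρ(μ_k(w,y))`. -/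
noncomputable def Lmargin (ρ : ℝ) {K : ℕ} (w : Fin K → ℝ) (y : Fin K) : ℝ :=
  ∑ k : Fin K, ramp ρ (margin w y k)

/-! Row `i` of `M^ρ(w)` only contains `Φ_ρ(w i)` and `Φ_ρ(-w i)`. Since `0 ≤ Φ_ρ ≤ 1` and
`Φ_ρ(x) + Φ_ρ(-x) ≥ 1`, every entry of `|M^ρ(u) - M^ρ(v)|` in row `i` is at most
`M^ρ_{i,y}(u) + M^ρ_{i,y}(v)`, for any column `y`. Summing over the `K` columns and over the rows
gives `‖M^ρ(u) - M^ρ(v)‖₁ ≤ K (L^ρ(u, y) + L^ρ(v, y))` pointwise; take `y` to be the label and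
integrate. -/

lemma ramp_nonneg {ρ : ℝ} (hρ : 0 < ρ) (x : ℝ) : 0 ≤ ramp ρ x := by
  unfold ramp
  split_ifs with h₁ h₂
  · rfl
  · exact zero_le_one
  · rw [sub_nonneg, div_le_one hρ]
    exact (not_le.mp h₁).le

lemma ramp_le_one {ρ : ℝ} (hρ : 0 < ρ) (x : ℝ) : ramp ρ x ≤ 1 := by
  unfold ramp
  split_ifs with h₁ h₂
  · exact zero_le_one
  · rfl
  · exact sub_le_self _ (div_pos (not_le.mp h₂) hρ).le

lemma one_le_ramp_add_ramp_neg {ρ : ℝ} (hρ : 0 < ρ) (x : ℝ) :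
    1 ≤ ramp ρ x + ramp ρ (-x) := by
  have hx := ramp_nonneg hρ x
  have hnegx := ramp_nonneg hρ (-x)
  unfold ramp at *
  rw [neg_div] at *
  split_ifs at * <;> linarith

lemma abs_ramp_sub_le_ramp_add {ρ : ℝ} (hρ : 0 < ρ) (a b : ℝ) :
    |ramp ρ a - ramp ρ b| ≤ ramp ρ a + ramp ρ b :=
  abs_sub_le_of_nonneg_of_le (ramp_nonneg hρ a) (le_add_of_nonneg_right (ramp_nonneg hρ b))
    (ramp_nonneg hρ b) (le_add_of_nonneg_left (ramp_nonneg hρ a))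

lemma abs_ramp_neg_sub_le_ramp_add {ρ : ℝ} (hρ : 0 < ρ) (a b : ℝ) :
    |ramp ρ (-a) - ramp ρ (-b)| ≤ ramp ρ a + ramp ρ b := by
  rw [abs_sub_le_iff]
  constructor
  · linarith [ramp_le_one hρ (-a), one_le_ramp_add_ramp_neg hρ b, ramp_nonneg hρ a]
  · linarith [ramp_le_one hρ (-b), one_le_ramp_add_ramp_neg hρ a, ramp_nonneg hρ b]

lemma margin_eq_or_eq_neg {K : ℕ} (i j y : Fin K) :
    (∀ w : Fin K → ℝ, margin w j i = margin w y i) ∨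
      ∀ w : Fin K → ℝ, margin w j i = -margin w y i := by
  simp only [margin]
  by_cases hij : i = j <;> by_cases hiy : i = y
  · exact Or.inl fun w => by rw [if_pos hij, if_pos hiy]
  · exact Or.inr fun w => by rw [if_pos hij, if_neg hiy, neg_neg]
  · exact Or.inr fun w => by rw [if_neg hij, if_pos hiy]
  · exact Or.inl fun w => by rw [if_neg hij, if_neg hiy]

lemma abs_ramp_margin_sub_le {ρ : ℝ} (hρ : 0 < ρ) {K : ℕ} (u v : Fin K → ℝ) (i j y : Fin K) :
    |ramp ρ (margin u j i) - ramp ρ (margin v j i)| ≤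
      ramp ρ (margin u y i) + ramp ρ (margin v y i) := by
  rcases margin_eq_or_eq_neg i j y with hsame | hneg
  · rw [hsame u, hsame v]
    exact abs_ramp_sub_le_ramp_add hρ _ _
  · rw [hneg u, hneg v]
    exact abs_ramp_neg_sub_le_ramp_add hρ _ _

lemma l1diff_le_mul_Lmargin_add {ρ : ℝ} (hρ : 0 < ρ) {K : ℕ} (u v : Fin K → ℝ) (y : Fin K) :
    l1diff ρ u v ≤ K * (Lmargin ρ u y + Lmargin ρ v y) :=
  calc l1diff ρ u v
      ≤ ∑ i : Fin K, ∑ _j : Fin K, (ramp ρ (margin u y i) + ramp ρ (margin v y i)) :=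
        sum_le_sum fun i _ => sum_le_sum fun j _ => abs_ramp_margin_sub_le hρ u v i j y
    _ = K * (Lmargin ρ u y + Lmargin ρ v y) := by
        simp only [sum_const, card_univ, Fintype.card_fin, nsmul_eq_mul, ← mul_sum,
          sum_add_distrib, Lmargin]

lemma one_div_mul_l1diff_le {ρ : ℝ} (hρ : 0 < ρ) {K : ℕ} (u v : Fin K → ℝ) (y : Fin K) :
    1 / (K : ℝ) * l1diff ρ u v ≤ Lmargin ρ u y + Lmargin ρ v y := by
  have hK : (0 : ℝ) < K := Nat.cast_pos.mpr (Fin.pos y)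
  rw [one_div_mul_eq_div, div_le_iff₀' hK]
  exact l1diff_le_mul_Lmargin_add hρ u v y

lemma l1diff_nonneg (ρ : ℝ) {K : ℕ} (u v : Fin K → ℝ) : 0 ≤ l1diff ρ u v :=
  sum_nonneg fun _ _ => sum_nonneg fun _ _ => abs_nonneg _

theorem lemmaA2_general {X : Type*} [MeasurableSpace X] {K : ℕ}
    (ρ : ℝ) (hρ : 0 < ρ)
    (D : Measure (X × Fin K))
    (f f' : X → Fin K → ℝ)
    (h2 : Integrable (fun p : X × Fin K => Lmargin ρ (f p.1) p.2) D)
    (h3 : Integrable (fun p : X × Fin K => Lmargin ρ (f' p.1) p.2) D) :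
    (1 / (K : ℝ)) * (∫ p, l1diff ρ (f p.1) (f' p.1) ∂D) ≤
      (∫ p, Lmargin ρ (f p.1) p.2 ∂D) + ∫ p, Lmargin ρ (f' p.1) p.2 ∂D := by
  rw [← integral_const_mul, ← integral_add h2 h3]
  refine integral_mono_of_nonneg (ae_of_all _ fun p => ?_) (h2.add h3)
    (ae_of_all _ fun p => one_div_mul_l1diff_le hρ _ _ p.2)
  exact mul_nonneg (one_div_nonneg.mpr K.cast_nonneg) (l1diff_nonneg ρ _ _)

theorem lemmaA2 {X : Type*} [MeasurableSpace X] {K : ℕ} (hK : 2 ≤ K)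
    (ρ : ℝ) (hρ : 0 < ρ)
    (D : Measure (X × Fin K)) (hD : IsProbabilityMeasure D)
    (f f' : X → Fin K → ℝ)
    (hfsum : ∀ x, ∑ k : Fin K, f x k = 0) (hf'sum : ∀ x, ∑ k : Fin K, f' x k = 0)
    (h1 : Integrable (fun p : X × Fin K => l1diff ρ (f p.1) (f' p.1)) D)
    (h2 : Integrable (fun p : X × Fin K => Lmargin ρ (f p.1) p.2) D)
    (h3 : Integrable (fun p : X × Fin K => Lmargin ρ (f' p.1) p.2) D) :
    (1 / (K : ℝ)) * (∫ p, l1diff ρ (f p.1) (f' p.1) ∂D) ≤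
      (∫ p, Lmargin ρ (f p.1) p.2 ∂D) + ∫ p, Lmargin ρ (f' p.1) p.2 ∂D :=
  lemmaA2_general ρ hρ D f f' h2 h3
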